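/- arXiv:quant-ph/0703062 — 2 statements merged into one kernel-verified Lean document; each statement's English description precedes it below -/
import Mathlib

section
/- The family S_P := (S_{δ_V(P)})_{V} is a sub-presheaf of the spectral presheaf Σ: for every inclusion V' ⊆ V of abelian von Neumann subalgebras, the restriction of any λ ∈ S_{δ_V(P)} lies in S_{δ_{V'}(P)}, i.e. λ|_{V'} ∈ S_{δ_{V'}(P)}. -/
open WeakDual

/-- An element of a star ring is a projection if it is a self-adjoint idempotent. -/
def IsProj' {C : Type*} [Ring C] [StarRing C] (p : C) : Prop :=
  p * p = p ∧ star p = p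

/-- The order `p ≤ q` on projections: `p * q = p = q * p`. -/
def ProjLE {C : Type*} [Mul C] (p q : C) : Prop :=
  p * q = p ∧ q * p = p

/-- `d` is the outer daseinisation of the projection `P` in the context `V`:
the smallest projection in `V` dominating `P`. -/
def IsDaseinisation {C : Type*} [Ring C] [StarRing C] (V : Set C) (P d : C) : Prop :=
  IsProj' d ∧ ProjLE P d ∧ ∀ q ∈ V, IsProj' q → ProjLE P q → ProjLE d q

theorem map_eq_one_of_mul_eq_left {F M N : Type*} [Mul M] [MulOneClass N] [FunLike F M N]
    [MulHomClass F M N] (f : F) {p q : M} (hpq : p * q = p) (hp : f p = 1) : f q = 1 :=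
  calc f q = f p * f q := by rw [hp, one_mul]
    _ = f (p * q) := (map_mul f p q).symm
    _ = 1 := by rw [hpq, hp]

theorem IsDaseinisation.projLE {C : Type*} [Ring C] [StarRing C] {V W : Set C} {P d e : C}
    (hd : IsDaseinisation V P d) (he : IsDaseinisation W P e) (heV : e ∈ V) : ProjLE d e :=
  hd.2.2 e heV he.1 he.2.1

theorem stmt_13_general {C : Type*} [NormedRing C] [NormedAlgebra ℂ C]
    [StarRing C] [StarModule ℂ C]
    (V V' : StarSubalgebra ℂ C) (hVV' : V' ≤ V)
    (r : characterSpace ℂ V → characterSpace ℂ V')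
    (hr : ∀ (l : characterSpace ℂ V) (x : V'), r l x = l ⟨(x : C), hVV' x.2⟩)
    (P : C)
    (dV dV' : C) (hdVmem : dV ∈ V) (hdV'mem : dV' ∈ V')
    (hdV : IsDaseinisation (V : Set C) P dV)
    (hdV' : IsDaseinisation (V' : Set C) P dV') :
    ∀ l : characterSpace ℂ V, l ⟨dV, hdVmem⟩ = 1 → r l ⟨dV', hdV'mem⟩ = 1 := by
  intro l hl
  have hle : ProjLE dV dV' := hdV.projLE hdV' (hVV' hdV'mem)
  rw [hr]
  exact map_eq_one_of_mul_eq_left l (Subtype.ext hle.1) hl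

/-- The family `(S_{δ_V(P)})_V` is a sub-presheaf of the spectral presheaf: the
restriction of any `λ ∈ S_{δ_V(P)}` lies in `S_{δ_{V'}(P)}`. -/
theorem stmt_13 {C : Type*} [NormedRing C] [NormedAlgebra ℂ C] [CompleteSpace C]
    [StarRing C] [CStarRing C] [StarModule ℂ C]
    (V V' : StarSubalgebra ℂ C) (hVV' : V' ≤ V)
    (hVcomm : ∀ a ∈ V, ∀ b ∈ V, a * b = b * a)
    (r : characterSpace ℂ V → characterSpace ℂ V')
    (hr : ∀ (l : characterSpace ℂ V) (x : V'), r l x = l ⟨(x : C), hVV' x.2⟩)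
    (P : C) (hPproj : IsProj' P)
    (dV dV' : C) (hdVmem : dV ∈ V) (hdV'mem : dV' ∈ V')
    (hdV : IsDaseinisation (V : Set C) P dV)
    (hdV' : IsDaseinisation (V' : Set C) P dV') :
    ∀ l : characterSpace ℂ V, l ⟨dV, hdVmem⟩ = 1 → r l ⟨dV', hdV'mem⟩ = 1 :=
  stmt_13_general V V' hVV' r hr P dV dV' hdVmem hdV'mem hdV hdV'
end

section
/- The map ψ ↦ T^ψ := (T^ψ_V)_V from unit vectors (modulo phase) to truth objects is injective: if ψ and φ are unit vectors with T^ψ_V = T^φ_V for all abelian von Neumann subalgebras V, then φ = c·ψ for some scalar c with |c| = 1. -/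
open scoped InnerProductSpace

/-- An operator is a projection if it is a self-adjoint idempotent. -/
def IsProjOp {H : Type*} [NormedAddCommGroup H] [InnerProductSpace ℂ H]
    [CompleteSpace H] (p : H →L[ℂ] H) : Prop :=
  p * p = p ∧ star p = p

/-- The map `ψ ↦ T^ψ = (T^ψ_V)_V` from unit vectors to truth objects is
injective up to phase: if `T^ψ_V = T^φ_V` for every abelian von Neumann
subalgebra `V` of `B(H)`, then `φ = c • ψ` with `|c| = 1`. -/
theorem stmt_18 {H : Type*} [NormedAddCommGroup H] [InnerProductSpace ℂ H]
    [CompleteSpace H] (ψ φ : H) (hψ : ‖ψ‖ = 1) (hφ : ‖φ‖ = 1)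
    (h : ∀ V : StarSubalgebra ℂ (H →L[ℂ] H),
      (∀ a ∈ V, ∀ b ∈ V, a * b = b * a) →
      IsClosed (V : Set (H →L[ℂ] H)) →
      {α : H →L[ℂ] H | α ∈ V ∧ IsProjOp α ∧ ⟪ψ, α ψ⟫_ℂ = 1} =
        {α : H →L[ℂ] H | α ∈ V ∧ IsProjOp α ∧ ⟪φ, α φ⟫_ℂ = 1}) :
    ∃ c : ℂ, ‖c‖ = 1 ∧ φ = c • ψ := by
  set P : H →L[ℂ] H := (innerSL ℂ ψ).smulRight ψ with hPdef
  have hPapp : ∀ x, P x = ⟪ψ, x⟫_ℂ • ψ := fun x => rfl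
  have hψψ : ⟪ψ, ψ⟫_ℂ = 1 := by
    rw [inner_self_eq_norm_sq_to_K, hψ]; norm_num
  have hPP : P * P = P := by
    ext x
    simp [ContinuousLinearMap.mul_apply, hPapp, inner_smul_right, hψψ, hψ]
  have hstar : star P = P := by
    rw [ContinuousLinearMap.star_eq_adjoint]
    symm
    rw [ContinuousLinearMap.eq_adjoint_iff]
    intro x y
    simp [hPapp, inner_smul_left, inner_smul_right, mul_comm]
  set S : Submodule ℂ (H →L[ℂ] H) := Submodule.span ℂ {1, P} with hSdef
  have hmem : ∀ x, x ∈ S ↔ ∃ a b : ℂ, a • 1 + b • P = x := fun x =>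
    Submodule.mem_span_pair
  have hmul : ∀ a b c d : ℂ,
      (a • (1 : H →L[ℂ] H) + b • P) * (c • 1 + d • P)
        = (a * c) • 1 + (a * d + b * c + b * d) • P := by
    intro a b c d
    simp only [mul_add, add_mul, smul_mul_smul_comm, one_mul, mul_one, hPP]
    module
  let V : StarSubalgebra ℂ (H →L[ℂ] H) :=
    { carrier := S
      mul_mem' := by
        intro x y hx hy
        obtain ⟨a, b, rfl⟩ := (hmem x).1 hx
        obtain ⟨c, d, rfl⟩ := (hmem y).1 hy
        exact (hmem _).2 ⟨a * c, a * d + b * c + b * d, (hmul a b c d).symm⟩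
      one_mem' := Submodule.subset_span (Or.inl rfl)
      add_mem' := fun hx hy => S.add_mem hx hy
      zero_mem' := S.zero_mem
      algebraMap_mem' := by
        intro c
        refine (hmem _).2 ⟨c, 0, ?_⟩
        simp [Algebra.algebraMap_eq_smul_one]
      star_mem' := by
        intro x hx
        obtain ⟨a, b, rfl⟩ := (hmem x).1 hx
        refine (hmem _).2 ⟨starRingEnd ℂ a, starRingEnd ℂ b, ?_⟩
        simp [star_add, star_smul, hstar] }
  have hVcomm : ∀ a ∈ V, ∀ b ∈ V, a * b = b * a := by
    intro x hx y hy
    obtain ⟨a, b, rfl⟩ := (hmem x).1 hx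
    obtain ⟨c, d, rfl⟩ := (hmem y).1 hy
    rw [hmul, hmul]; ring_nf
  have hVclosed : IsClosed (V : Set (H →L[ℂ] H)) := by
    haveI : FiniteDimensional ℂ S :=
      FiniteDimensional.span_of_finite ℂ (Set.toFinite _)
    exact S.closed_of_finiteDimensional
  have hPV : P ∈ V := Submodule.subset_span (Or.inr rfl)
  have hPT : P ∈ {α : H →L[ℂ] H | α ∈ V ∧ IsProjOp α ∧ ⟪ψ, α ψ⟫_ℂ = 1} :=
    ⟨hPV, ⟨hPP, hstar⟩, by simp [hPapp, inner_smul_right, hψψ, hψ]⟩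
  have hPT' := (h V hVcomm hVclosed) ▸ hPT
  have hconj : ⟪φ, ψ⟫_ℂ = (starRingEnd ℂ) ⟪ψ, φ⟫_ℂ := (inner_conj_symm φ ψ).symm
  have hcc : ⟪ψ, φ⟫_ℂ * (starRingEnd ℂ) ⟪ψ, φ⟫_ℂ = 1 := by
    have := hPT'.2.2
    rw [hPapp, inner_smul_right, hconj] at this
    linear_combination this
  have hn : ‖⟪ψ, φ⟫_ℂ‖ = 1 := by
    have h2 : (Complex.normSq ⟪ψ, φ⟫_ℂ : ℂ) = 1 := by
      rw [← Complex.mul_conj]; exact hcc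
    have h3 : Complex.normSq ⟪ψ, φ⟫_ℂ = 1 := by exact_mod_cast h2
    have h4 := Complex.sq_norm ⟪ψ, φ⟫_ℂ
    nlinarith [norm_nonneg ⟪ψ, φ⟫_ℂ]
  refine ⟨⟪ψ, φ⟫_ℂ, hn, ?_⟩
  · set c := ⟪ψ, φ⟫_ℂ with hc
    have hnc : ‖(starRingEnd ℂ) c • φ‖ = 1 := by
      rw [norm_smul, RCLike.norm_conj, hφ, mul_one]; exact hn
    have h1 : ⟪ψ, (starRingEnd ℂ) c • φ⟫_ℂ = 1 := by
      rw [inner_smul_right, ← hc, mul_comm]; exact hcc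
    have := (inner_eq_one_iff_of_norm_eq_one hψ hnc).1 h1
    have h2 : c • ψ = (c * (starRingEnd ℂ) c) • φ := by
      rw [this, smul_smul]
    rw [hcc, one_smul] at h2
    exact h2.symm
end
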